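/- arXiv:1802.00899 — 4 statements merged into one kernel-verified Lean document; each statement's English description precedes it below -/
import Mathlib

section
/- Let N ≥ 1, k ∈ {1,…,N}, and let α, γ ∈ ℝ with 0 < α < 1 and 0 < γ < 1. Let w_1,…,w_N ∈ ℝ satisfy w_j > 0 for all j and w̄ := Σ_{j=1}^N w_j < 1. Let x_{i−1} > 0 and define x_i := (x_{i−1}(1 − w̄))^α and x_{i+1} := (x_i(1 − w̄))^α (real powers). Then the Euler equation of agent k, namely −(x_i^{1/α − 1}/α)/(x_{i−1} − x_i^{1/α} − Σ_{j≠k} w_j x_{i−1}) + γ(1 − Σ_{j≠k} w_j)/(x_i − x_{i+1}^{1/α} − Σ_{j≠k} w_j x_i) = 0, holds if and only if αγ(1 + w_k − w̄) = 1 − w̄. -/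
/-!
Along the closed-loop path `x_{i+1} = (x_i (1 - w̄))^α` the real root `x_{i+1}^{1/α}` undoes the
dynamics, so each denominator of the Euler equation is agent `k`'s own harvest `w_k x`, and the
marginal term `x_i^{1/α - 1}` equals `x_{i-1} (1 - w̄) / x_i`. The state then cancels and the
equation reduces to the linear condition `αγ(1 - Σ_{j≠k} w_j) = 1 - w̄`.
-/

open Finset

lemma rpow_rpow_one_div {t α : ℝ} (ht : 0 ≤ t) (hα : α ≠ 0) : (t ^ α) ^ (1 / α) = t := by
  rw [one_div, Real.rpow_rpow_inv ht hα]

lemma sub_sub_own_harvest (x c s w : ℝ) (hc : c = 1 - (s + w)) : x - x * c - s * x = x * w := by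
  rw [hc]; ring

lemma euler_linear_eq_zero_iff {α γ b c w x y : ℝ} (hα : α ≠ 0) (hw : w ≠ 0) (hx : x ≠ 0)
    (hy : y ≠ 0) :
    -(x * c / y / α) / (x * w) + γ * b / (y * w) = 0 ↔ α * γ * b = c := by
  rw [div_add_div _ _ (mul_ne_zero hx hw) (mul_ne_zero hy hw)]
  field_simp
  constructor <;> intro h <;> linarith

theorem fish_war_euler_iff_general (N : ℕ) (k : Fin N) (α γ : ℝ)
    (hα0 : 0 < α)
    (w : Fin N → ℝ) (hw : ∀ j, 0 < w j) (hsum : ∑ j, w j < 1)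
    (xm : ℝ) (hxm : 0 < xm) :
    (-(((xm * (1 - ∑ j, w j)) ^ α) ^ (1 / α - 1) / α) /
        (xm - ((xm * (1 - ∑ j, w j)) ^ α) ^ (1 / α)
          - (∑ j ∈ Finset.univ.erase k, w j) * xm)
      + γ * (1 - ∑ j ∈ Finset.univ.erase k, w j) /
        ((xm * (1 - ∑ j, w j)) ^ α
          - ((((xm * (1 - ∑ j, w j)) ^ α) * (1 - ∑ j, w j)) ^ α) ^ (1 / α)
          - (∑ j ∈ Finset.univ.erase k, w j) * ((xm * (1 - ∑ j, w j)) ^ α)) = 0)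
    ↔ α * γ * (1 + w k - ∑ j, w j) = 1 - ∑ j, w j := by
  set s := ∑ j ∈ Finset.univ.erase k, w j
  have hsplit : s + w k = ∑ j, w j := Finset.sum_erase_add _ _ (Finset.mem_univ k)
  set c := 1 - ∑ j, w j
  have hc_pos : 0 < c := sub_pos.mpr hsum
  set xi := (xm * c) ^ α
  have hxi_pos : 0 < xi := Real.rpow_pos_of_pos (mul_pos hxm hc_pos) α
  have hxi_root : xi ^ (1 / α) = xm * c := rpow_rpow_one_div (mul_pos hxm hc_pos).le hα0.ne'
  have hnext_root : ((xi * c) ^ α) ^ (1 / α) = xi * c :=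
    rpow_rpow_one_div (mul_pos hxi_pos hc_pos).le hα0.ne'
  have hmarginal : xi ^ (1 / α - 1) = xm * c / xi := by
    rw [Real.rpow_sub_one hxi_pos.ne', hxi_root]
  rw [hxi_root, hnext_root, hmarginal, sub_sub_own_harvest xm c s (w k) (by rw [hsplit]),
    sub_sub_own_harvest xi c s (w k) (by rw [hsplit]), ← hsplit, add_sub_add_right_eq_sub,
    euler_linear_eq_zero_iff hα0.ne' (hw k).ne' hxm.ne' hxi_pos.ne']

/-- The Euler equation of agent `k` in the great fish war with linear policies
`π_j(x) = w_j x` holds along the closed-loop trajectory if and only if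
`αγ(1 + w_k - w̄) = 1 - w̄` where `w̄ = ∑ j, w j`. -/
theorem fish_war_euler_iff (N : ℕ) (hN : 1 ≤ N) (k : Fin N) (α γ : ℝ)
    (hα0 : 0 < α) (hα1 : α < 1) (hγ0 : 0 < γ) (hγ1 : γ < 1)
    (w : Fin N → ℝ) (hw : ∀ j, 0 < w j) (hsum : ∑ j, w j < 1)
    (xm : ℝ) (hxm : 0 < xm) :
    (-(((xm * (1 - ∑ j, w j)) ^ α) ^ (1 / α - 1) / α) /
        (xm - ((xm * (1 - ∑ j, w j)) ^ α) ^ (1 / α)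
          - (∑ j ∈ Finset.univ.erase k, w j) * xm)
      + γ * (1 - ∑ j ∈ Finset.univ.erase k, w j) /
        ((xm * (1 - ∑ j, w j)) ^ α
          - ((((xm * (1 - ∑ j, w j)) ^ α) * (1 - ∑ j, w j)) ^ α) ^ (1 / α)
          - (∑ j ∈ Finset.univ.erase k, w j) * ((xm * (1 - ∑ j, w j)) ^ α)) = 0)
    ↔ α * γ * (1 + w k - ∑ j, w j) = 1 - ∑ j, w j :=
  fish_war_euler_iff_general N k α γ hα0 w hw hsum xm hxm
end

section
/- Let α, γ ∈ ℝ with 0 < α and 0 < γ, let w_k > 0, let w̄ ∈ ℝ with 0 < w̄ < 1, let i ≥ 1 be a natural number, let x_{i−1} > 0 and x_i := (x_{i−1}(1 − w̄))^α. Define the multipliers β_i := γ^i/(α x_i^α (1 − w̄)^{α−1} w_k) and β_{i−1} := γ^{i−1}/(α x_{i−1}^α (1 − w̄)^{α−1} w_k). Then the Euler–Lagrange equation γ^i + β_i · α x_i^α (1 − w̄)^α − β_{i−1} x_i = 0 holds if and only if αγ(1 + w_k − w̄) = 1 − w̄. -/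
/-! Substituting the multipliers, every power of the state cancels: with `s = 1 - w̄`,
`β_i α x_i^α s^α = γ^i s / w_k` and `β_{i-1} x_i = γ^{i-1} s / (α w_k)`, because
`x_i = x_{i-1}^α s^α`. The Euler–Lagrange residual is therefore
`γ^{i-1} / (α w_k) · (αγ(1 + w_k - w̄) - (1 - w̄))`, whose prefactor is nonzero. -/

namespace FishWar

variable {α s w c : ℝ}

lemma div_mul_rpow_eq_mul_div (hα : α ≠ 0) (hs : 0 < s) (hw : w ≠ 0) {y : ℝ} (hy : y ≠ 0) :
    c / (α * y * s ^ (α - 1) * w) * α * y * s ^ α = c * s / w := by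
  have hsα : s ^ α ≠ 0 := (Real.rpow_pos_of_pos hs α).ne'
  rw [Real.rpow_sub_one hs.ne']
  field_simp

lemma div_mul_mul_rpow_eq_mul_div (hα : α ≠ 0) (hs : 0 < s) (hw : w ≠ 0) {x : ℝ} (hx : 0 < x) :
    c / (α * x ^ α * s ^ (α - 1) * w) * (x * s) ^ α = c * s / (α * w) := by
  have hxα : x ^ α ≠ 0 := (Real.rpow_pos_of_pos hx α).ne'
  have hsα : s ^ α ≠ 0 := (Real.rpow_pos_of_pos hs α).ne'
  rw [Real.mul_rpow hx.le hs.le, Real.rpow_sub_one hs.ne']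
  field_simp

end FishWar

theorem fish_war_euler_lagrange_iff_general (α γ wk wbar : ℝ)
    (hα : 0 < α) (hγ : 0 < γ) (hwk : 0 < wk)
    (hwbar1 : wbar < 1)
    (i : ℕ) (hi : 1 ≤ i) (xm : ℝ) (hxm : 0 < xm) :
    (γ ^ i
      + (γ ^ i / (α * ((xm * (1 - wbar)) ^ α) ^ α * (1 - wbar) ^ (α - 1) * wk))
          * α * ((xm * (1 - wbar)) ^ α) ^ α * (1 - wbar) ^ α
      - (γ ^ (i - 1) / (α * xm ^ α * (1 - wbar) ^ (α - 1) * wk))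
          * ((xm * (1 - wbar)) ^ α) = 0)
    ↔ α * γ * (1 + wk - wbar) = 1 - wbar := by
  obtain ⟨j, rfl⟩ : ∃ j, i = j + 1 := ⟨i - 1, by omega⟩
  have hs : 0 < 1 - wbar := by linarith
  have hxi : ((xm * (1 - wbar)) ^ α) ^ α ≠ 0 :=
    (Real.rpow_pos_of_pos (Real.rpow_pos_of_pos (mul_pos hxm hs) α) α).ne'
  rw [FishWar.div_mul_rpow_eq_mul_div hα.ne' hs hwk.ne' hxi,
    FishWar.div_mul_mul_rpow_eq_mul_div hα.ne' hs hwk.ne' hxm, Nat.add_sub_cancel]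
  have residual : γ ^ (j + 1) + γ ^ (j + 1) * (1 - wbar) / wk - γ ^ j * (1 - wbar) / (α * wk)
      = γ ^ j / (α * wk) * (α * γ * (1 + wk - wbar) - (1 - wbar)) := by
    field_simp
    ring
  have prefactor : γ ^ j / (α * wk) ≠ 0 := by positivity
  rw [residual, mul_eq_zero, or_iff_right prefactor, sub_eq_zero]

/-- With the dual variables `β_i = γ^i/(α x_i^α (1-w̄)^(α-1) w_k)` obtained from the
KKT stationarity condition in the policy parameter, the Euler–Lagrange equation
`γ^i + β_i α x_i^α (1-w̄)^α - β_{i-1} x_i = 0` of the great fish war OCP holds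
if and only if `αγ(1 + w_k - w̄) = 1 - w̄`. -/
theorem fish_war_euler_lagrange_iff (α γ wk wbar : ℝ)
    (hα : 0 < α) (hγ : 0 < γ) (hwk : 0 < wk)
    (hwbar0 : 0 < wbar) (hwbar1 : wbar < 1)
    (i : ℕ) (hi : 1 ≤ i) (xm : ℝ) (hxm : 0 < xm) :
    (γ ^ i
      + (γ ^ i / (α * ((xm * (1 - wbar)) ^ α) ^ α * (1 - wbar) ^ (α - 1) * wk))
          * α * ((xm * (1 - wbar)) ^ α) ^ α * (1 - wbar) ^ α
      - (γ ^ (i - 1) / (α * xm ^ α * (1 - wbar) ^ (α - 1) * wk))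
          * ((xm * (1 - wbar)) ^ α) = 0)
    ↔ α * γ * (1 + wk - wbar) = 1 - wbar :=
  fish_war_euler_lagrange_iff_general α γ wk wbar hα hγ hwk hwbar1 i hi xm hxm
end

section
/- Let N ≥ 1, h : {1,…,N} → ℝ, a : {1,…,N} → ℝ with a_j ≥ 0 for all j, and fix k. Set D := Σ_{j≠k} h_j² a_j. Then the map t ↦ log(1 + h_k² t/(1 + D)) has derivative h_k²/(1 + h_k² a_k + D) at t = a_k, and the map t ↦ log(1 + h_k² t + D) also has derivative h_k²/(1 + h_k² a_k + D) at t = a_k. Hence the partial derivative of agent k's MAC reward with respect to its own power a_k equals the corresponding partial derivative of the potential J, both being h_k²/(1 + Σ_{j=1}^N h_j² a_j). -/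
open Finset

theorem Real.hasDerivAt_log_mul_add {q c x : ℝ} (hx : q * x + c ≠ 0) :
    HasDerivAt (fun t => Real.log (q * t + c)) (q / (q * x + c)) x := by
  simpa using (((hasDerivAt_id x).const_mul q).add_const c).log hx

theorem Real.hasDerivAt_log_one_add_mul_div {q s x : ℝ} (hs : s ≠ 0) (hx : s + q * x ≠ 0) :
    HasDerivAt (fun t => Real.log (1 + q * t / s)) (q / (s + q * x)) x := by
  have hx' : q / s * x + 1 ≠ 0 := by
    rw [div_mul_eq_mul_div, div_add_one hs, add_comm]
    exact div_ne_zero hx hs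
  convert Real.hasDerivAt_log_mul_add hx' using 1
  · ext t
    ring_nf
  · rw [div_div]
    congr 1
    field_simp
    ring

theorem mac_potential_gradient_matching_general (N : ℕ)
    (h a : Fin N → ℝ) (ha : ∀ j, 0 ≤ a j) (k : Fin N) :
    HasDerivAt
        (fun t : ℝ => Real.log
          (1 + h k ^ 2 * t / (1 + ∑ j ∈ Finset.univ.erase k, h j ^ 2 * a j)))
        (h k ^ 2 / (1 + h k ^ 2 * a k + ∑ j ∈ Finset.univ.erase k, h j ^ 2 * a j))
        (a k) ∧
    HasDerivAt
        (fun t : ℝ => Real.log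
          (1 + h k ^ 2 * t + ∑ j ∈ Finset.univ.erase k, h j ^ 2 * a j))
        (h k ^ 2 / (1 + h k ^ 2 * a k + ∑ j ∈ Finset.univ.erase k, h j ^ 2 * a j))
        (a k) ∧
    h k ^ 2 / (1 + h k ^ 2 * a k + ∑ j ∈ Finset.univ.erase k, h j ^ 2 * a j)
      = h k ^ 2 / (1 + ∑ j, h j ^ 2 * a j) := by
  set D := ∑ j ∈ univ.erase k, h j ^ 2 * a j
  have hD : 0 ≤ D := sum_nonneg fun j _ => mul_nonneg (sq_nonneg _) (ha j)
  have hk : 0 ≤ h k ^ 2 * a k := mul_nonneg (sq_nonneg _) (ha k)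
  refine ⟨?_, ?_, ?_⟩
  · convert Real.hasDerivAt_log_one_add_mul_div (q := h k ^ 2) (s := 1 + D) (x := a k)
      (by linarith) (by linarith) using 2
    ring
  · convert Real.hasDerivAt_log_mul_add (q := h k ^ 2) (c := 1 + D) (x := a k)
      (by linarith) using 1 <;> ring_nf
  · rw [← add_sum_erase _ _ (mem_univ k), add_assoc]

/-- Gradient matching in the MAC game: the derivative of agent `k`'s rate reward
with respect to its own power equals that of the potential's rate term, both being
`h_k²/(1 + ∑ j, h_j² a_j)`. -/
theorem mac_potential_gradient_matching (N : ℕ) (hN : 1 ≤ N)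
    (h a : Fin N → ℝ) (ha : ∀ j, 0 ≤ a j) (k : Fin N) :
    HasDerivAt
        (fun t : ℝ => Real.log
          (1 + h k ^ 2 * t / (1 + ∑ j ∈ Finset.univ.erase k, h j ^ 2 * a j)))
        (h k ^ 2 / (1 + h k ^ 2 * a k + ∑ j ∈ Finset.univ.erase k, h j ^ 2 * a j))
        (a k) ∧
    HasDerivAt
        (fun t : ℝ => Real.log
          (1 + h k ^ 2 * t + ∑ j ∈ Finset.univ.erase k, h j ^ 2 * a j))
        (h k ^ 2 / (1 + h k ^ 2 * a k + ∑ j ∈ Finset.univ.erase k, h j ^ 2 * a j))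
        (a k) ∧
    h k ^ 2 / (1 + h k ^ 2 * a k + ∑ j ∈ Finset.univ.erase k, h j ^ 2 * a j)
      = h k ^ 2 / (1 + ∑ j, h j ^ 2 * a j) :=
  mac_potential_gradient_matching_general N h a ha k
end

section
/- Let ι be a type with decidable equality, (W_k)_{k∈ι} a family of types, F : ∀ k, ℝ → W_k → ℝ per-agent transition maps, x⁰ : ι → ℝ an initial state, and define the decoupled trajectory X(w)_k(0) = x⁰_k, X(w)_k(i+1) = F_k(X(w)_k(i), w_k). Let γ ∈ ℝ, and let J, and for each k, Θ_k, be functions from (ι → ℝ) × (∏_j W_j) to ℝ, where Θ_k is invariant under changes of agent k's own state coordinate and parameter: Θ_k(x, w) = Θ_k(x', w') whenever x_j = x'_j and w_j = w'_j for all j ≠ k. Define r_k := J + Θ_k, and for a joint parameter w define V_k(w) := Σ_{i=0}^∞ γ^i r_k(X(w)_·(i), w) and P(w) := Σ_{i=0}^∞ γ^i J(X(w)_·(i), w). Fix an agent k, a joint parameter w, and a deviation v ∈ W_k, and write w' for the update of w at coordinate k by v. If the four series defining V_k(w), V_k(w'), P(w), P(w') are all summable, then V_k(w) − V_k(w') =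 P(w) − P(w'). In particular, the game is an exact potential game with potential P. -/
/-- The decoupled closed-loop trajectory of agent `k`:
`X(w)_k(0) = x⁰_k` and `X(w)_k(i+1) = F_k(X(w)_k(i), w_k)`. -/
def decoupledTraj {ι : Type*} {W : ι → Type*}
    (F : ∀ k : ι, ℝ → W k → ℝ) (x0 : ι → ℝ) (w : ∀ j, W j) (k : ι) : ℕ → ℝ
  | 0 => x0 k
  | (i + 1) => F k (decoupledTraj F x0 w k i) (w k)

/-- Theorem 2 mechanism: with decoupled per-agent dynamics and rewards
`r_k = J + Θ_k`, where `Θ_k` depends neither on agent `k`'s own state coordinate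
nor its own parameter, a unilateral deviation of agent `k` changes its discounted
value `V_k` by exactly the change in the discounted potential `P`, so the game is
an exact potential game with potential `P`. -/
theorem decoupled_separable_game_is_potential {ι : Type*} [DecidableEq ι]
    {W : ι → Type*} (F : ∀ k : ι, ℝ → W k → ℝ) (x0 : ι → ℝ) (γ : ℝ)
    (J : (ι → ℝ) → (∀ j, W j) → ℝ) (Θ : ι → (ι → ℝ) → (∀ j, W j) → ℝ)
    (hΘ : ∀ (k : ι) (x x' : ι → ℝ) (w w' : ∀ j, W j),
      (∀ j, j ≠ k → x j = x' j) → (∀ j, j ≠ k → w j = w' j) →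
        Θ k x w = Θ k x' w')
    (k : ι) (w : ∀ j, W j) (v : W k)
    (hVw : Summable (fun i : ℕ => γ ^ i *
      (J (fun j => decoupledTraj F x0 w j i) w
        + Θ k (fun j => decoupledTraj F x0 w j i) w)))
    (hVw' : Summable (fun i : ℕ => γ ^ i *
      (J (fun j => decoupledTraj F x0 (Function.update w k v) j i)
          (Function.update w k v)
        + Θ k (fun j => decoupledTraj F x0 (Function.update w k v) j i)
          (Function.update w k v))))
    (hPw : Summable (fun i : ℕ => γ ^ i *
      J (fun j => decoupledTraj F x0 w j i) w))
    (hPw' : Summable (fun i : ℕ => γ ^ i *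
      J (fun j => decoupledTraj F x0 (Function.update w k v) j i)
        (Function.update w k v))) :
    (∑' i : ℕ, γ ^ i *
        (J (fun j => decoupledTraj F x0 w j i) w
          + Θ k (fun j => decoupledTraj F x0 w j i) w))
      - (∑' i : ℕ, γ ^ i *
        (J (fun j => decoupledTraj F x0 (Function.update w k v) j i)
            (Function.update w k v)
          + Θ k (fun j => decoupledTraj F x0 (Function.update w k v) j i)
            (Function.update w k v)))
    = (∑' i : ℕ, γ ^ i * J (fun j => decoupledTraj F x0 w j i) w)
      - (∑' i : ℕ, γ ^ i *
          J (fun j => decoupledTraj F x0 (Function.update w k v) j i)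
            (Function.update w k v)) := by
  set w' := Function.update w k v with hw'
  have htraj : ∀ j, j ≠ k → ∀ i, decoupledTraj F x0 w' j i = decoupledTraj F x0 w j i := by
    intro j hj i
    induction i with
    | zero => rfl
    | succ n ih => rw [hw'] at ih; simp [decoupledTraj, ih, hw', Function.update_of_ne hj]
  have hΘeq : ∀ i, Θ k (fun j => decoupledTraj F x0 w' j i) w'
      = Θ k (fun j => decoupledTraj F x0 w j i) w := by
    intro i
    exact hΘ k _ _ _ _ (fun j hj => htraj j hj i)
      (fun j hj => Function.update_of_ne hj v w)
  have hV : ∀ (u : ∀ j, W j),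
      Summable (fun i : ℕ => γ ^ i * (J (fun j => decoupledTraj F x0 u j i) u
        + Θ k (fun j => decoupledTraj F x0 u j i) u)) →
      Summable (fun i : ℕ => γ ^ i * J (fun j => decoupledTraj F x0 u j i) u) →
      (∑' i : ℕ, γ ^ i * (J (fun j => decoupledTraj F x0 u j i) u
        + Θ k (fun j => decoupledTraj F x0 u j i) u))
      = (∑' i : ℕ, γ ^ i * J (fun j => decoupledTraj F x0 u j i) u)
        + (∑' i : ℕ, γ ^ i * Θ k (fun j => decoupledTraj F x0 u j i) u) := by
    intro u hVu hPu
    have hΘu : Summable (fun i : ℕ => γ ^ i * Θ k (fun j => decoupledTraj F x0 u j i) u) := by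
      have := hVu.sub hPu
      simpa [mul_add, add_sub_cancel_left] using this
    rw [← Summable.tsum_add hPu hΘu]
    congr 1 with i
    ring
  rw [hV w hVw hPw, hV w' hVw' hPw']
  simp only [hΘeq]
  ring
end
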